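/- arXiv:1008.2375 — 4 statements merged into one kernel-verified Lean document; each statement's English description precedes it below -/
import Mathlib

section
/- For all n ≥ 1 and 1 ≤ k ≤ n, the number of increasing ordered trees with n edges whose leaves taken in preorder are increasing and whose root has exactly k children equals u(n,k), where u(n,k) is defined by u(0,0) = 1, u(n,0) = 0 for n ≥ 1, and u(n,k) = u(n-1,k-1) + k·Σ_{j=k}^{n-1} u(n-1,j) for 1 ≤ k ≤ n. -/
inductive OTree : Type where
  | node : ℕ → List OTree → OTree

/-- The label of the root of the tree. -/
def OTree.label : OTree → ℕ
  | .node l _ => l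

/-- The (ordered) list of subtrees at the root. -/
def OTree.children : OTree → List OTree
  | .node _ ts => ts

/-- Labels of all vertices in preorder. -/
def OTree.preorder : OTree → List ℕ
  | .node l ts => l :: (ts.attach.map (fun t => OTree.preorder t.1)).flatten
decreasing_by
  have := List.sizeOf_lt_of_mem t.2
  simp only [OTree.node.sizeOf_spec]
  omega

/-- Labels of the leaves, in preorder (walkaround) order. -/
def OTree.leaves : OTree → List ℕ
  | .node l ts =>
      if ts.isEmpty then [l] else (ts.attach.map (fun t => OTree.leaves t.1)).flatten
decreasing_by
  have := List.sizeOf_lt_of_mem t.2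
  simp only [OTree.node.sizeOf_spec]
  omega

/-- Each child's label exceeds its parent's label. -/
inductive OTree.Increasing : OTree → Prop where
  | node : ∀ (l : ℕ) (ts : List OTree),
      (∀ t ∈ ts, l < t.label) → (∀ t ∈ ts, t.Increasing) →
      OTree.Increasing (.node l ts)

/-- An increasing ordered tree of size `n` (i.e. with `n` edges): an ordered
tree with `n+1` vertices labeled `0,1,...,n` (each label used exactly once, as
recorded by the preorder list of labels), rooted at the vertex labeled `0`,
such that each child's label exceeds its parent's label. -/
def IsIncOrdTree (n : ℕ) (t : OTree) : Prop :=
  t.label = 0 ∧ t.preorder.Perm (List.range (n + 1)) ∧ t.Increasing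

/-- The labels of the leaves, taken in preorder, are increasing. -/
def HasIncLeaves (t : OTree) : Prop :=
  t.leaves.Pairwise (· < ·)


/-!
In a tree of size `n + 1` the vertex `1` is a child of the root. If it is a leaf it is the
smallest leaf, so it must be the first child of the root, and deleting it leaves a tree of size
`n` with one root child fewer. Otherwise contract the edge from the root to `1`, so that the
children of `1` become root children in its place: the leaf sequence does not change and the root
now has some `j ≥ k + 1` children. Conversely such a tree, together with any of `k + 1` positions
`i`, gives back a tree of size `n + 1` by putting the `j - k` root subtrees starting at position
`i` under a new vertex `1`. Shifting labels by one keeps the label set `{0, …, n}`. This gives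
`u (n + 1) (k + 1) = u n k + (k + 1) * ∑_{j = k+1}^{n} u n j`.
-/

theorem List.perm_range_succ_iff {l : List ℕ} {n : ℕ} :
    (0 :: l.map (· + 1)).Perm (List.range (n + 1)) ↔ l.Perm (List.range n) := by
  rw [List.range_succ_eq_map, List.perm_cons, List.map_perm_map_iff (add_left_injective 1)]

theorem List.pairwise_lt_map_succ_iff {l : List ℕ} :
    (l.map (· + 1)).Pairwise (· < ·) ↔ l.Pairwise (· < ·) := by
  simp [List.pairwise_map]

theorem List.take_append_take_drop_append_drop {α : Type*} (l : List α) (i m : ℕ) :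
    l.take i ++ (l.drop i).take m ++ l.drop (i + m) = l := by
  rw [← List.take_add, List.take_append_drop]

namespace OTree

@[elab_as_elim, induction_eliminator]
theorem induction {P : OTree → Prop} (node : ∀ l ts, (∀ t ∈ ts, P t) → P (node l ts)) :
    ∀ t, P t
  | .node l ts => node l ts fun t _ => induction node t
decreasing_by
  have := List.sizeOf_lt_of_mem ‹t ∈ ts›
  simp only [OTree.node.sizeOf_spec]
  omega

@[simp] theorem label_node (l : ℕ) (ts : List OTree) : (node l ts).label = l := rfl

@[simp] theorem children_node (l : ℕ) (ts : List OTree) : (node l ts).children = ts := rfl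

theorem eta (t : OTree) : t = node t.label t.children := by cases t; rfl

@[simp] theorem preorder_node (l : ℕ) (ts : List OTree) :
    (node l ts).preorder = l :: (ts.map preorder).flatten := by
  rw [preorder]; simp

@[simp] theorem leaves_node_nil (l : ℕ) : (node l []).leaves = [l] := by
  simp [leaves]

theorem leaves_node_of_ne_nil {ts : List OTree} (h : ts ≠ []) (l : ℕ) :
    (node l ts).leaves = (ts.map leaves).flatten := by
  rw [leaves]; simp [h]

theorem label_mem_preorder (t : OTree) : t.label ∈ t.preorder := by
  cases t; simp

theorem preorder_ne_nil (t : OTree) : t.preorder ≠ [] :=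
  List.ne_nil_of_mem t.label_mem_preorder

theorem length_le_length_flatten_preorder (ts : List OTree) :
    ts.length ≤ (ts.map preorder).flatten.length := by
  simpa [List.length_flatten] using List.length_le_sum_of_one_le (ts.map (List.length ∘ preorder))
    (by simpa [Nat.one_le_iff_ne_zero] using fun t _ => t.preorder_ne_nil)

theorem label_ne_of_nodup {l : ℕ} {ts : List OTree} (h : (node l ts).preorder.Nodup)
    {c : OTree} (hc : c ∈ ts) : c.label ≠ l := by
  rintro rfl
  rw [preorder_node, List.nodup_cons] at h
  exact h.1 (List.mem_flatten_of_mem (List.mem_map_of_mem hc) c.label_mem_preorder)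

theorem leaves_ne_nil (t : OTree) : t.leaves ≠ [] := by
  induction t with
  | node l ts ih =>
    rcases ts with _ | ⟨c, ts⟩
    · simp
    · rw [leaves_node_of_ne_nil (List.cons_ne_nil _ _)]
      exact fun h => ih c (by simp) (List.flatten_eq_nil_iff.mp h _ (by simp))

theorem mem_preorder_of_mem_leaves {t : OTree} {v : ℕ} (hv : v ∈ t.leaves) : v ∈ t.preorder := by
  induction t with
  | node l ts ih =>
    rcases eq_or_ne ts [] with rfl | hts
    · simpa using hv
    · rw [leaves_node_of_ne_nil hts] at hv
      obtain ⟨_, ⟨c, hc, rfl⟩, hvc⟩ := by simpa only [List.mem_flatten, List.mem_map] using hv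
      simpa using Or.inr ⟨c, hc, ih c hc hvc⟩

theorem increasing_node_iff {l : ℕ} {ts : List OTree} :
    (node l ts).Increasing ↔ ∀ t ∈ ts, l < t.label ∧ t.Increasing := by
  constructor
  · rintro ⟨_, _, hlabel, hsub⟩
    exact fun t ht => ⟨hlabel t ht, hsub t ht⟩
  · intro h
    exact .node l ts (fun t ht => (h t ht).1) (fun t ht => (h t ht).2)

theorem Increasing.label_le {t : OTree} (h : t.Increasing) {v : ℕ} (hv : v ∈ t.preorder) :
    t.label ≤ v := by
  induction t with
  | node l ts ih =>
    rw [increasing_node_iff] at h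
    obtain rfl | ⟨_, ⟨c, hc, rfl⟩, hvc⟩ := by simpa only [preorder_node, List.mem_cons,
      List.mem_flatten, List.mem_map] using hv
    · simp
    · exact (h c hc).1.le.trans (ih c hc (h c hc).2 hvc)

theorem Increasing.lt_of_mem_child {l : ℕ} {ts : List OTree}
    (h : (OTree.node l ts).Increasing) {c : OTree} (hc : c ∈ ts) {v : ℕ} (hv : v ∈ c.preorder) :
    l < v := by
  rw [increasing_node_iff] at h
  exact (h c hc).1.trans_le ((h c hc).2.label_le hv)

theorem finite_setOf_length_preorder_le {s : Set ℕ} (hs : s.Finite) (N : ℕ) :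
    {t : OTree | t.preorder.length ≤ N ∧ ∀ v ∈ t.preorder, v ∈ s}.Finite := by
  induction N with
  | zero => simp [preorder_ne_nil]
  | succ N ih =>
    set T := {t : OTree | t.preorder.length ≤ N ∧ ∀ v ∈ t.preorder, v ∈ s}
    have hforests : {ts : List OTree | ts.length ≤ N ∧ ∀ t ∈ ts, t ∈ T}.Finite := by
      have := ih.to_subtype
      refine ((List.finite_length_le T N).image (List.map Subtype.val)).subset ?_
      rintro ts ⟨hlen, hts⟩
      lift ts to List T using hts
      exact ⟨ts, by simpa using hlen, rfl⟩
    refine ((hs.prod hforests).image fun p => node p.1 p.2).subset ?_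
    rintro ⟨l, ts⟩ ⟨hlen, hmem⟩
    have hsub : ∀ t ∈ ts, t.preorder.Sublist (ts.map preorder).flatten := fun t ht =>
      List.sublist_flatten_of_mem (List.mem_map_of_mem ht)
    simp only [preorder_node, List.length_cons, List.mem_cons, forall_eq_or_imp] at hlen hmem
    refine ⟨(l, ts), ⟨hmem.1, (length_le_length_flatten_preorder ts).trans (by omega),
      fun t ht => ⟨(hsub t ht).length_le.trans (by omega), fun v hv => ?_⟩⟩, rfl⟩
    exact hmem.2 v ((hsub t ht).subset hv)

def relabel (f : ℕ → ℕ) : OTree → OTree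
  | .node l ts => .node (f l) (ts.attach.map fun t => relabel f t.1)
decreasing_by
  have := List.sizeOf_lt_of_mem t.2
  simp only [OTree.node.sizeOf_spec]
  omega

section Relabel

variable (f : ℕ → ℕ)

@[simp] theorem relabel_node (l : ℕ) (ts : List OTree) :
    relabel f (node l ts) = node (f l) (ts.map (relabel f)) := by
  rw [relabel]; simp

@[simp] theorem label_relabel (t : OTree) : (relabel f t).label = f t.label := by
  cases t; simp

@[simp] theorem preorder_relabel (t : OTree) : (relabel f t).preorder = t.preorder.map f := by
  induction t with
  | node l ts ih =>
    simp only [relabel_node, preorder_node, List.map_cons, List.map_flatten, List.map_map]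
    exact congrArg _ (congrArg List.flatten (List.map_congr_left ih))

@[simp] theorem leaves_relabel (t : OTree) : (relabel f t).leaves = t.leaves.map f := by
  induction t with
  | node l ts ih =>
    rcases eq_or_ne ts [] with rfl | hts
    · simp
    · rw [relabel_node, leaves_node_of_ne_nil (by simpa using hts), leaves_node_of_ne_nil hts,
        List.map_flatten, List.map_map, List.map_map]
      exact congrArg _ (List.map_congr_left ih)

theorem flatten_map_preorder_relabel (ts : List OTree) :
    ((ts.map (relabel f)).map preorder).flatten = (ts.map preorder).flatten.map f := by
  simp [List.map_flatten, Function.comp_def]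

theorem flatten_map_leaves_relabel (ts : List OTree) :
    ((ts.map (relabel f)).map leaves).flatten = (ts.map leaves).flatten.map f := by
  simp [List.map_flatten, Function.comp_def]

theorem relabel_relabel (g : ℕ → ℕ) (t : OTree) :
    relabel f (relabel g t) = relabel (f ∘ g) t := by
  induction t with
  | node l ts ih => simpa using List.map_congr_left ih

theorem relabel_eq_self {t : OTree} (h : ∀ v ∈ t.preorder, f v = v) : relabel f t = t := by
  induction t with
  | node l ts ih =>
    simp only [preorder_node, List.mem_cons, List.mem_flatten, List.mem_map] at h
    simp only [relabel_node, h l (.inl rfl), node.injEq, true_and]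
    exact List.map_congr_left (g := id) (fun c hc => ih c hc fun v hv =>
      h v (.inr ⟨_, ⟨c, hc, rfl⟩, hv⟩)) |>.trans ts.map_id

end Relabel

theorem increasing_relabel_iff {f : ℕ → ℕ} (hf : StrictMono f) {t : OTree} :
    (relabel f t).Increasing ↔ t.Increasing := by
  induction t with
  | node l ts ih => simp +contextual [increasing_node_iff, hf.lt_iff_lt, ih]

@[simp] theorem increasing_relabel_succ_iff {t : OTree} :
    (relabel (· + 1) t).Increasing ↔ t.Increasing :=
  increasing_relabel_iff fun _ _ => Nat.succ_lt_succ

theorem relabel_pred_relabel_succ (t : OTree) : relabel (· - 1) (relabel (· + 1) t) = t := by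
  rw [relabel_relabel]; exact relabel_eq_self _ fun v _ => by simp

theorem relabel_succ_injective : Function.Injective (relabel (· + 1)) :=
  Function.LeftInverse.injective relabel_pred_relabel_succ

theorem relabel_succ_relabel_pred {t : OTree} (h : ∀ v ∈ t.preorder, 0 < v) :
    relabel (· + 1) (relabel (· - 1) t) = t := by
  rw [relabel_relabel]
  exact relabel_eq_self _ fun v hv => Nat.sub_add_cancel (h v hv)

section NodeAppendNode

variable (l a : ℕ) (A M B : List OTree)

theorem preorder_node_append_node_perm :
    (node l (A ++ node a M :: B)).preorder.Perm
      (l :: a :: ((A ++ M ++ B).map preorder).flatten) := by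
  simp only [preorder_node, List.map_append, List.map_cons, List.flatten_append,
    List.flatten_cons, List.perm_cons, List.append_assoc, List.cons_append]
  exact List.perm_middle

theorem leaves_node_append_node (hM : M ≠ []) :
    (node l (A ++ node a M :: B)).leaves = ((A ++ M ++ B).map leaves).flatten := by
  rw [leaves_node_of_ne_nil (by simp)]
  simp [leaves_node_of_ne_nil hM]

theorem increasing_node_append_node_iff (hl : l < a) (ha : ∀ d ∈ A ++ M ++ B, a < d.label) :
    (node l (A ++ node a M :: B)).Increasing ↔ ∀ d ∈ A ++ M ++ B, d.Increasing := by
  simp only [List.forall_mem_append] at ha ⊢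
  simp only [increasing_node_iff, List.forall_mem_append, List.forall_mem_cons, label_node]
  grind

end NodeAppendNode

/-- Raise every label of `node 0 cs` by one and insert a new vertex `1` as the `i`-th child of the
root, adopting the `m` root subtrees that followed it. -/
def graft (i m : ℕ) (cs : List OTree) : OTree :=
  let ds := cs.map (relabel (· + 1))
  node 0 (ds.take i ++ node 1 ((ds.drop i).take m) :: ds.drop (i + m))

theorem preorder_graft_perm (i m : ℕ) (cs : List OTree) :
    (graft i m cs).preorder.Perm (0 :: (node 0 cs).preorder.map (· + 1)) := by
  refine (preorder_node_append_node_perm ..).trans ?_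
  rw [List.take_append_take_drop_append_drop, flatten_map_preorder_relabel, preorder_node]
  rfl

theorem increasing_graft_iff {i m : ℕ} {cs : List OTree} (hcs : ∀ c ∈ cs, 0 < c.label) :
    (graft i m cs).Increasing ↔ (node 0 cs).Increasing := by
  rw [graft, increasing_node_append_node_iff _ _ _ _ _ zero_lt_one,
    List.take_append_take_drop_append_drop]
  · simp +contextual [increasing_node_iff, hcs]
  · rw [List.take_append_take_drop_append_drop]; simpa using hcs

theorem length_children_graft {i m : ℕ} {cs : List OTree} (h : i + m ≤ cs.length) :
    (graft i m cs).children.length = cs.length - m + 1 := by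
  simp [graft]; omega

theorem graft_inj {i m i' m' : ℕ} {cs cs' : List OTree} (hcs : ∀ c ∈ cs, 0 < c.label)
    (h : i + m ≤ cs.length) (h' : i' + m' ≤ cs'.length)
    (heq : graft i m cs = graft i' m' cs') : i = i' ∧ m = m' ∧ cs = cs' := by
  have hlab : ∀ d ∈ cs.map (relabel (· + 1)), d.label ≠ 1 := by
    simpa [Nat.pos_iff_ne_zero] using hcs
  simp only [graft, node.injEq, true_and] at heq
  obtain ⟨hA, hM, hB⟩ := (List.append_cons_inj_of_notMem
    (fun hx => hlab _ (List.mem_of_mem_take hx) rfl)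
    (fun hx => hlab _ (List.mem_of_mem_drop hx) rfl)).1 heq
  simp only [node.injEq, true_and] at hM
  obtain rfl : i = i' := by
    have := congrArg List.length hA
    simp only [List.length_take, List.length_map] at this
    omega
  obtain rfl : m = m' := by
    have := congrArg List.length hM
    simp only [List.length_take, List.length_drop, List.length_map] at this
    omega
  refine ⟨rfl, rfl, List.map_injective_iff.2 relabel_succ_injective ?_⟩
  rw [← List.take_append_take_drop_append_drop (cs.map _) i m,
    ← List.take_append_take_drop_append_drop (cs'.map _) i m, hA, hM, hB]

end OTree

open OTree

theorem finite_setOf_isIncOrdTree (n : ℕ) : {t | IsIncOrdTree n t}.Finite :=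
  (finite_setOf_length_preorder_le (Set.finite_Iio (n + 1)) (n + 1)).subset
    fun _ ⟨_, hperm, _⟩ => ⟨by simp [hperm.length_eq], fun v hv => by
      simpa using hperm.subset hv⟩

namespace IsIncOrdTree

variable {n : ℕ} {t : OTree}

theorem eq_node (h : IsIncOrdTree n t) : t = node 0 t.children := by
  rw [← h.1]; exact t.eta

theorem increasing_of_mem_children (h : IsIncOrdTree n t) {c : OTree} (hc : c ∈ t.children) :
    c.Increasing := by
  have hinc := h.2.2
  rw [t.eta, increasing_node_iff] at hinc
  exact (hinc c hc).2

theorem pos_of_mem_child (h : IsIncOrdTree n t) {c : OTree} (hc : c ∈ t.children) {v : ℕ}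
    (hv : v ∈ c.preorder) : 0 < v := by
  obtain ⟨hlab, -, hinc⟩ := h
  rw [t.eta, hlab] at hinc
  exact hinc.lt_of_mem_child hc hv

theorem label_pos_of_mem_children (h : IsIncOrdTree n t) {c : OTree} (hc : c ∈ t.children) :
    0 < c.label :=
  h.pos_of_mem_child hc c.label_mem_preorder

theorem length_children_le (h : IsIncOrdTree n t) : t.children.length ≤ n := by
  have hlen := h.2.1.length_eq
  rw [t.eta, preorder_node, List.length_cons, List.length_range] at hlen
  have := length_le_length_flatten_preorder t.children
  omega

end IsIncOrdTree

theorem isIncOrdTree_node_nil_iff {n : ℕ} : IsIncOrdTree n (node 0 []) ↔ n = 0 := by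
  constructor
  · intro h; simpa using h.2.1.length_eq
  · rintro rfl; exact ⟨rfl, by simp, by simp [increasing_node_iff]⟩

theorem isIncOrdTree_graft_iff {n i m : ℕ} {cs : List OTree} :
    IsIncOrdTree (n + 1) (graft i m cs) ↔ IsIncOrdTree n (node 0 cs) := by
  have hperm : (graft i m cs).preorder.Perm (List.range (n + 1 + 1)) ↔
      (node 0 cs).preorder.Perm (List.range (n + 1)) :=
    ((preorder_graft_perm i m cs).congr_left _).trans List.perm_range_succ_iff
  have hcs (h : (node 0 cs).preorder.Perm (List.range (n + 1))) : ∀ c ∈ cs, 0 < c.label :=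
    fun c hc => Nat.pos_of_ne_zero (label_ne_of_nodup (h.nodup_iff.2 List.nodup_range) hc)
  simp only [IsIncOrdTree, label_node, true_and, graft]
  exact ⟨fun ⟨hp, hi⟩ => ⟨hperm.1 hp, (increasing_graft_iff (hcs (hperm.1 hp))).1 hi⟩,
    fun ⟨hp, hi⟩ => ⟨hperm.2 hp, (increasing_graft_iff (hcs hp)).2 hi⟩⟩

theorem hasIncLeaves_graft_iff {i m : ℕ} {cs : List OTree} (hm : 0 < m)
    (h : i + m ≤ cs.length) : HasIncLeaves (graft i m cs) ↔ HasIncLeaves (node 0 cs) := by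
  have hcs : cs ≠ [] := List.ne_nil_of_length_pos (by omega)
  rw [HasIncLeaves, graft, leaves_node_append_node, List.take_append_take_drop_append_drop,
    flatten_map_leaves_relabel, List.pairwise_lt_map_succ_iff, HasIncLeaves,
    leaves_node_of_ne_nil hcs]
  simp; omega

theorem hasIncLeaves_graft_zero_iff {n : ℕ} {cs : List OTree} (ht : IsIncOrdTree n (node 0 cs)) :
    HasIncLeaves (graft 0 0 cs) ↔ HasIncLeaves (node 0 cs) := by
  rcases eq_or_ne cs [] with rfl | hcs
  · simp [HasIncLeaves, graft, leaves_node_of_ne_nil]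
  · have hpos : ∀ v ∈ (cs.map leaves).flatten, 0 < v := by
      simp only [List.mem_flatten, List.mem_map]
      rintro v ⟨_, ⟨c, hc, rfl⟩, hv⟩
      exact ht.pos_of_mem_child hc (mem_preorder_of_mem_leaves hv)
    rw [HasIncLeaves, graft, leaves_node_of_ne_nil (by simp), HasIncLeaves,
      leaves_node_of_ne_nil hcs]
    simp only [List.take_zero, List.drop_zero, add_zero, List.nil_append, List.map_cons,
      List.flatten_cons, leaves_node_nil, flatten_map_leaves_relabel, List.singleton_append,
      List.pairwise_cons, List.pairwise_lt_map_succ_iff, List.forall_mem_map]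
    exact and_iff_right_of_imp fun _ v hv => Nat.succ_lt_succ (hpos v hv)

theorem IsIncOrdTree.exists_eq_node_append_node {n : ℕ} {s : OTree}
    (hs : IsIncOrdTree (n + 1) s) : ∃ X M Y, s = node 0 (X ++ node 1 M :: Y) := by
  obtain ⟨c, hc, h1c⟩ : ∃ c ∈ s.children, 1 ∈ c.preorder := by
    have h1 : 1 ∈ s.preorder := hs.2.1.mem_iff.2 (by simp)
    rw [hs.eq_node, preorder_node] at h1
    simpa using h1
  have hclab : c.label = 1 :=
    le_antisymm ((hs.increasing_of_mem_children hc).label_le h1c)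
      (hs.label_pos_of_mem_children hc)
  obtain ⟨X, Y, hXY⟩ := List.append_of_mem hc
  exact ⟨X, c.children, Y, by rw [hs.eq_node, hXY, ← hclab, ← c.eta]⟩

theorem graft_eq_node_append_node {X M Y : List OTree}
    (hpos : ∀ d ∈ X ++ M ++ Y, ∀ v ∈ d.preorder, 0 < v) :
    graft X.length M.length ((X ++ M ++ Y).map (relabel (· - 1))) =
      node 0 (X ++ node 1 M :: Y) := by
  have hlift : ((X ++ M ++ Y).map (relabel (· - 1))).map (relabel (· + 1)) = X ++ M ++ Y := by
    rw [List.map_map]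
    exact (List.map_congr_left fun d hd => relabel_succ_relabel_pred (hpos d hd)).trans
      (List.map_id _)
  rw [graft, hlift]
  simp

theorem exists_graft_eq {n : ℕ} {s : OTree} (hs : IsIncOrdTree (n + 1) s) (hl : HasIncLeaves s) :
    ∃ i m cs, i + m ≤ cs.length ∧ (m = 0 → i = 0) ∧ graft i m cs = s := by
  obtain ⟨X, M, Y, rfl⟩ := hs.exists_eq_node_append_node
  have hpos : ∀ d ∈ X ++ M ++ Y, ∀ v ∈ d.preorder, 0 < v := by
    intro d hd v hv
    rcases List.mem_append.1 hd with hd | hd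
    · rcases List.mem_append.1 hd with hd | hd
      · exact hs.pos_of_mem_child (by simp [hd]) hv
      · exact hs.pos_of_mem_child (c := node 1 M) (by simp)
          (by simpa using Or.inr ⟨d, hd, hv⟩)
    · exact hs.pos_of_mem_child (by simp [hd]) hv
  refine ⟨X.length, M.length, _, by simp, fun hM => ?_, graft_eq_node_append_node hpos⟩
  -- a leaf `1` is the smallest leaf, so no subtree can precede it
  rcases X with _ | ⟨x, X⟩
  · rfl
  obtain ⟨v, hv⟩ := List.exists_mem_of_ne_nil _ x.leaves_ne_nil
  rw [List.length_eq_zero_iff] at hM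
  subst hM
  rw [HasIncLeaves, leaves_node_of_ne_nil (by simp)] at hl
  simp only [List.cons_append, List.map_cons, List.flatten_cons, List.map_append,
    List.flatten_append, leaves_node_nil, List.pairwise_append] at hl
  have := hl.2.2 v hv 1 (by simp)
  have := hpos x (by simp) v (mem_preorder_of_mem_leaves hv)
  omega

def IsIncLeafTree (n k : ℕ) (t : OTree) : Prop :=
  IsIncOrdTree n t ∧ HasIncLeaves t ∧ t.children.length = k

instance (n k : ℕ) : Finite {t // IsIncLeafTree n k t} :=
  ((finite_setOf_isIncOrdTree n).subset fun _ ht => ht.1).to_subtype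

instance (n k : ℕ) : Finite {t // IsIncOrdTree n t ∧ HasIncLeaves t ∧ k ≤ t.children.length} :=
  ((finite_setOf_isIncOrdTree n).subset fun _ ht => ht.1).to_subtype

theorem isIncLeafTree_graft_zero_iff {n k : ℕ} {cs : List OTree} :
    IsIncLeafTree (n + 1) (k + 1) (graft 0 0 cs) ↔ IsIncLeafTree n k (node 0 cs) := by
  rw [IsIncLeafTree, IsIncLeafTree, isIncOrdTree_graft_iff, length_children_graft (by simp),
    children_node, Nat.sub_zero, Nat.add_right_cancel_iff]
  exact and_congr_right fun h => and_congr_left' (hasIncLeaves_graft_zero_iff h)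

theorem isIncLeafTree_graft_iff {n i m : ℕ} {cs : List OTree} (hm : 0 < m)
    (h : i + m ≤ cs.length) :
    IsIncLeafTree (n + 1) (cs.length - m + 1) (graft i m cs) ↔
      IsIncOrdTree n (node 0 cs) ∧ HasIncLeaves (node 0 cs) := by
  simp only [IsIncLeafTree, isIncOrdTree_graft_iff, hasIncLeaves_graft_iff hm h,
    length_children_graft h, and_true]

theorem IsIncLeafTree.graft_zero {n k : ℕ} {t : OTree} (ht : IsIncLeafTree n k t) :
    IsIncLeafTree (n + 1) (k + 1) (graft 0 0 t.children) := by
  rw [isIncLeafTree_graft_zero_iff, ← ht.1.eq_node]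
  exact ht

theorem isIncLeafTree_graft_of_lt_length {n k : ℕ} (i : Fin (k + 1)) {t : OTree}
    (ht : IsIncOrdTree n t ∧ HasIncLeaves t ∧ k + 1 ≤ t.children.length) :
    IsIncLeafTree (n + 1) (k + 1) (graft i (t.children.length - k) t.children) := by
  have h : i + (t.children.length - k) ≤ t.children.length := by omega
  have := (isIncLeafTree_graft_iff (n := n) (by omega) h).2
    (by rw [← ht.1.eq_node]; exact ⟨ht.1, ht.2.1⟩)
  rwa [Nat.sub_sub_self (by omega)] at this

def graftSum (n k : ℕ) :
    {t // IsIncLeafTree n k t} ⊕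
      (Fin (k + 1) × {t // IsIncOrdTree n t ∧ HasIncLeaves t ∧ k + 1 ≤ t.children.length}) →
    {t // IsIncLeafTree (n + 1) (k + 1) t}
  | .inl t => ⟨graft 0 0 t.1.children, t.2.graft_zero⟩
  | .inr (i, t) =>
    ⟨graft i (t.1.children.length - k) t.1.children, isIncLeafTree_graft_of_lt_length i t.2⟩

theorem graftSum_injective (n k : ℕ) : Function.Injective (graftSum n k) := by
  rintro (⟨t, ht⟩ | ⟨i, t, ht⟩) (⟨t', ht'⟩ | ⟨i', t', ht'⟩) heq <;>
    simp only [graftSum, Subtype.mk.injEq] at heq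
  · obtain ⟨-, -, h⟩ := graft_inj (fun _ hc => ht.1.label_pos_of_mem_children hc)
      (by simp) (by simp) heq
    rw [Sum.inl.injEq, Subtype.mk.injEq, ht.1.eq_node, ht'.1.eq_node, h]
  · have := (graft_inj (fun _ hc => ht.1.label_pos_of_mem_children hc)
      (by simp) (by omega) heq).2.1
    omega
  · have := (graft_inj (fun _ hc => ht.1.label_pos_of_mem_children hc)
      (by omega) (by simp) heq).2.1
    omega
  · obtain ⟨hi, -, h⟩ := graft_inj (fun _ hc => ht.1.label_pos_of_mem_children hc)
      (by omega) (by omega) heq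
    rw [Sum.inr.injEq, Prod.mk.injEq, Subtype.mk.injEq, ht.1.eq_node, ht'.1.eq_node, h]
    exact ⟨Fin.ext hi, rfl⟩

theorem graftSum_surjective (n k : ℕ) : Function.Surjective (graftSum n k) := by
  rintro ⟨s, hs⟩
  obtain ⟨i, m, cs, h, hi, rfl⟩ := exists_graft_eq hs.1 hs.2.1
  rcases Nat.eq_zero_or_pos m with rfl | hm
  · obtain rfl := hi rfl
    exact ⟨.inl ⟨node 0 cs, isIncLeafTree_graft_zero_iff.1 hs⟩, rfl⟩
  · have hlen : cs.length = k + m := by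
      have := length_children_graft h ▸ hs.2.2
      omega
    obtain ⟨hcs, hl⟩ := (isIncLeafTree_graft_iff (n := n) hm h).1
      (by rwa [show cs.length - m + 1 = k + 1 by omega])
    refine ⟨.inr (⟨i, by omega⟩, ⟨node 0 cs, hcs, hl, by simp; omega⟩), ?_⟩
    simp [graftSum, hlen]

namespace IsIncLeafTree

theorem card_zero_zero : Nat.card {t // IsIncLeafTree 0 0 t} = 1 := by
  refine Nat.card_eq_one_iff_exists.2
    ⟨⟨node 0 [], isIncOrdTree_node_nil_iff.2 rfl, by simp [HasIncLeaves], rfl⟩, ?_⟩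
  rintro ⟨t, ht, -, hlen⟩
  exact Subtype.ext (ht.eq_node.trans (by rw [List.length_eq_zero_iff.1 hlen]))

theorem card_succ_zero (n : ℕ) : Nat.card {t // IsIncLeafTree (n + 1) 0 t} = 0 := by
  have : IsEmpty {t // IsIncLeafTree (n + 1) 0 t} := ⟨fun ⟨t, ht, _, hlen⟩ => by
    rw [ht.eq_node, List.length_eq_zero_iff.1 hlen, isIncOrdTree_node_nil_iff] at ht
    exact n.succ_ne_zero ht⟩
  exact Nat.card_of_isEmpty

theorem card_le_length_children (n k : ℕ) :
    Nat.card {t // IsIncOrdTree n t ∧ HasIncLeaves t ∧ k ≤ t.children.length} =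
      ∑ j ∈ Finset.Icc k n, Nat.card {t // IsIncLeafTree n j t} := by
  rw [← Finset.sum_coe_sort, ← Nat.card_sigma]
  exact Nat.card_congr
    { toFun t := ⟨⟨t.1.children.length, Finset.mem_Icc.2 ⟨t.2.2.2, t.2.1.length_children_le⟩⟩,
        t.1, t.2.1, t.2.2.1, rfl⟩
      invFun p := ⟨p.2.1, p.2.2.1, p.2.2.2.1, p.2.2.2.2.symm ▸ (Finset.mem_Icc.1 p.1.2).1⟩
      left_inv _ := rfl
      right_inv := by
        rintro ⟨⟨j, hj⟩, t, ht⟩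
        obtain rfl := ht.2.2
        rfl }

theorem card_succ_succ (n k : ℕ) :
    Nat.card {t // IsIncLeafTree (n + 1) (k + 1) t} =
      Nat.card {t // IsIncLeafTree n k t} +
        (k + 1) * ∑ j ∈ Finset.Icc (k + 1) n, Nat.card {t // IsIncLeafTree n j t} := by
  rw [← Nat.card_congr (Equiv.ofBijective _ ⟨graftSum_injective n k, graftSum_surjective n k⟩),
    Nat.card_sum, Nat.card_prod, Nat.card_fin, card_le_length_children]

end IsIncLeafTree

theorem stmt1_general (u : ℕ → ℕ → ℕ) (hu0 : u 0 0 = 1)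
    (hu1 : ∀ n : ℕ, 1 ≤ n → u n 0 = 0)
    (hrec : ∀ n k : ℕ, 1 ≤ k → k ≤ n →
      u n k = u (n - 1) (k - 1) + k * ∑ j ∈ Finset.Icc k (n - 1), u (n - 1) j)
    (n k : ℕ) (hkn : k ≤ n) :
    Nat.card {t : OTree //
        IsIncOrdTree n t ∧ HasIncLeaves t ∧ t.children.length = k}
      = u n k := by
  change Nat.card {t // IsIncLeafTree n k t} = u n k
  induction n generalizing k with
  | zero =>
    obtain rfl : k = 0 := by omega
    rw [IsIncLeafTree.card_zero_zero, hu0]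
  | succ n ih =>
    rcases k with _ | k
    · rw [IsIncLeafTree.card_succ_zero, hu1 _ (by omega)]
    · rw [IsIncLeafTree.card_succ_succ, hrec _ _ (by omega) hkn, ih k (by omega), Nat.add_sub_cancel,
        Nat.add_sub_cancel]
      congr 2
      exact Finset.sum_congr rfl fun j hj => ih j (Finset.mem_Icc.1 hj).2

theorem stmt1 (u : ℕ → ℕ → ℕ) (hu0 : u 0 0 = 1)
    (hu1 : ∀ n : ℕ, 1 ≤ n → u n 0 = 0)
    (hrec : ∀ n k : ℕ, 1 ≤ k → k ≤ n →
      u n k = u (n - 1) (k - 1) + k * ∑ j ∈ Finset.Icc k (n - 1), u (n - 1) j)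
    (n k : ℕ) (hn : 1 ≤ n) (hk : 1 ≤ k) (hkn : k ≤ n) :
    Nat.card {t : OTree //
        IsIncOrdTree n t ∧ HasIncLeaves t ∧ t.children.length = k}
      = u n k :=
  stmt1_general u hu0 hu1 hrec n k hkn
end

section
/- For all n ≥ 1, the number of Stirling permutations of size n equals the odd double factorial (2n-1)!! = 1·3·5···(2n-1). -/
/-- `l` is a permutation (as a sequence) of the multiset `{1,1,2,2,...,n,n}`. -/
def IsDoubleMultiset (n : ℕ) (l : List ℕ) : Prop :=
  ∀ i : ℕ, l.count i = if 1 ≤ i ∧ i ≤ n then 2 else 0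

/-- A Stirling permutation of size `n`: a permutation of `{1,1,2,2,...,n,n}`
such that every entry lying strictly between the two (equal) occurrences of a
value exceeds that value. -/
def IsStirlingPerm (n : ℕ) (l : List ℕ) : Prop :=
  IsDoubleMultiset n l ∧
    ∀ a b c : Fin l.length, a < b → b < c → l.get a = l.get c →
      l.get a < l.get b

/-- A Gessel permutation of size `n`: a permutation of `{1,1,2,2,...,n,n}` in
which the second occurrence of each value is a right-to-left minimum
(equivalently, the second occurrences of `1,2,...,n` appear in that order). -/
def IsGesselPerm (n : ℕ) (l : List ℕ) : Prop :=
  IsDoubleMultiset n l ∧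
    ∀ a c d : Fin l.length, a < c → l.get a = l.get c → c < d →
      l.get c < l.get d

/-!
In a Stirling permutation of size `n + 1` the two copies of `n + 1` are adjacent, since an entry
between them would have to exceed `n + 1`. Deleting this block leaves a Stirling permutation of
size `n`, and conversely the block may be inserted into any of the `2n + 1` gaps of a Stirling
permutation of size `n`. So the number of Stirling permutations grows by the factor `2n + 1` from
size `n` to `n + 1`, which is the recursion of `(2n - 1)‼`.
-/

namespace List

variable {α : Type*}

theorem triple_sublist_iff {l : List α} {x y z : α} :
    [x, y, z] <+ l ↔ ∃ a b c : Fin l.length, a < b ∧ b < c ∧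
      l.get a = x ∧ l.get b = y ∧ l.get c = z := by
  rw [sublist_iff_exists_fin_orderEmbedding_get_eq]
  constructor
  · rintro ⟨f, hf⟩
    exact ⟨f 0, f 1, f 2, f.strictMono (show (0 : Fin 3) < 1 by decide),
      f.strictMono (show (1 : Fin 3) < 2 by decide),
      (hf 0).symm, (hf 1).symm, (hf 2).symm⟩
  · rintro ⟨a, b, c, hab, hbc, rfl, rfl, rfl⟩
    refine ⟨OrderEmbedding.ofStrictMono ![a, b, c] ?_, fun i => ?_⟩
    · refine Fin.strictMono_iff_lt_succ.2 fun i => ?_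
      fin_cases i
      exacts [hab, hbc]
    · fin_cases i <;> rfl

theorem not_sublist_append_cons_cons {s t : List α} {a b : α} (hs : a ∉ s) (ht : a ∉ t) :
    ¬ [a, b, a] <+ s ++ a :: a :: t := by
  intro h
  obtain ⟨p, q, he, hp, hq⟩ := sublist_append_iff.1 h
  rcases p with _ | ⟨x, p⟩
  · rw [nil_append] at he
    subst he
    obtain ⟨q1, q2, he, hq1, hq2⟩ :=
      sublist_append_iff.1 (show [a, b, a] <+ [a, a] ++ t from hq)
    have : a ∈ q2 := by
      have := hq1.length_le
      rcases q1 with _ | ⟨_, _ | ⟨_, _ | ⟨_, _⟩⟩⟩ <;> grind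
    exact ht (hq2.subset this)
  · simp only [cons_append, cons.injEq] at he
    exact hs (he.1 ▸ hp.subset mem_cons_self)

theorem exists_eq_append_cons_cons [DecidableEq α] {l : List α} {a : α}
    (hcount : l.count a = 2) (hgap : ∀ b, ¬ [a, b, a] <+ l) :
    ∃ s t, l = s ++ a :: a :: t ∧ a ∉ s ∧ a ∉ t := by
  obtain ⟨s, r, rfl, hs⟩ := eq_append_cons_of_mem (count_pos_iff.1 (by omega : 0 < l.count a))
  have hr : r.count a = 1 := by
    simpa [count_append, count_eq_zero.2 hs] using hcount
  obtain ⟨u, t, rfl, hu⟩ := eq_append_cons_of_mem (count_pos_iff.1 (by omega : 0 < r.count a))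
  rcases u with _ | ⟨b, u⟩
  · exact ⟨s, t, rfl, hs, count_eq_zero.1 (by simpa using hr)⟩
  · refine absurd ?_ (hgap b)
    exact sublist_append_of_sublist_right (cons_sublist_cons.2 (cons_sublist_cons.2
      (singleton_sublist.2 (mem_append_right _ mem_cons_self))))

theorem filter_ne_append_cons_cons [DecidableEq α] {s t : List α} {a : α}
    (hs : a ∉ s) (ht : a ∉ t) : (s ++ a :: a :: t).filter (· ≠ a) = s ++ t := by
  have filter_eq {l : List α} (hl : a ∉ l) : l.filter (· ≠ a) = l :=
    filter_eq_self.2 fun x hx => by simpa using ne_of_mem_of_not_mem hx hl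
  rw [filter_append, filter_eq hs, filter_cons_of_neg (by simp), filter_cons_of_neg (by simp),
    filter_eq ht]

theorem idxOf_append_cons_cons [DecidableEq α] {s t : List α} {a : α} (hs : a ∉ s) :
    (s ++ a :: a :: t).idxOf a = s.length := by
  simp [idxOf_append_of_notMem hs]

end List

open List

namespace IsDoubleMultiset

variable {n : ℕ} {l : List ℕ}

theorem mem_Icc (h : IsDoubleMultiset n l) {v : ℕ} (hv : v ∈ l) : v ∈ Finset.Icc 1 n := by
  by_contra hv'
  have hpos := count_pos_iff.2 hv
  rw [h v, if_neg (by simpa using hv')] at hpos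
  exact lt_irrefl 0 hpos

theorem length_eq (h : IsDoubleMultiset n l) : l.length = 2 * n := by
  rw [← Multiset.coe_card, ← Multiset.sum_count_eq_card fun v hv => h.mem_Icc hv]
  simp only [Multiset.coe_count]
  rw [Finset.sum_congr rfl fun v hv => (h v).trans (if_pos (Finset.mem_Icc.1 hv))]
  simp [mul_comm]

theorem succ_notMem (h : IsDoubleMultiset n l) : n + 1 ∉ l := fun hm => by
  simpa using h.mem_Icc hm

end IsDoubleMultiset

theorem isDoubleMultiset_zero_iff {l : List ℕ} : IsDoubleMultiset 0 l ↔ l = [] := by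
  refine ⟨fun h => eq_nil_iff_forall_not_mem.2 fun v hv => by simpa using h.mem_Icc hv,
    fun h i => by rw [h, count_nil, if_neg (by omega)]⟩

theorem isDoubleMultiset_succ_iff {n : ℕ} {s t : List ℕ} (hs : n + 1 ∉ s) (ht : n + 1 ∉ t) :
    IsDoubleMultiset (n + 1) (s ++ (n + 1) :: (n + 1) :: t) ↔ IsDoubleMultiset n (s ++ t) := by
  refine forall_congr' fun i => ?_
  rcases eq_or_ne i (n + 1) with rfl | hi
  · simp [count_eq_zero.2 hs, count_eq_zero.2 ht]
  · simp only [count_append, count_cons, beq_iff_eq, hi.symm, if_false]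
    split_ifs <;> omega

theorem isStirlingPerm_iff_sublist {n : ℕ} {l : List ℕ} :
    IsStirlingPerm n l ↔ IsDoubleMultiset n l ∧ ∀ v w, [v, w, v] <+ l → v < w := by
  refine and_congr_right fun _ => ⟨?_, ?_⟩
  · intro h v w hvw
    obtain ⟨a, b, c, hab, hbc, rfl, rfl, hc⟩ := triple_sublist_iff.1 hvw
    exact h a b c hab hbc hc.symm
  · exact fun h a b c hab hbc hac =>
      h _ _ (triple_sublist_iff.2 ⟨a, b, c, hab, hbc, rfl, rfl, hac.symm⟩)

theorem isStirlingPerm_zero_iff {l : List ℕ} : IsStirlingPerm 0 l ↔ l = [] := by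
  rw [isStirlingPerm_iff_sublist, isDoubleMultiset_zero_iff]
  exact ⟨And.left, fun h => ⟨h, by simp [h]⟩⟩

theorem isStirlingPerm_succ_iff {n : ℕ} {s t : List ℕ} (hs : n + 1 ∉ s) (ht : n + 1 ∉ t) :
    IsStirlingPerm (n + 1) (s ++ (n + 1) :: (n + 1) :: t) ↔ IsStirlingPerm n (s ++ t) := by
  simp only [isStirlingPerm_iff_sublist, isDoubleMultiset_succ_iff hs ht]
  refine and_congr_right fun hdm => ⟨fun h v w hvw => h v w ?_, fun h v w hvw => ?_⟩
  · exact hvw.trans (by simp)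
  rcases eq_or_ne v (n + 1) with rfl | hv
  · exact absurd hvw (not_sublist_append_cons_cons hs ht)
  rcases eq_or_ne w (n + 1) with rfl | hw
  · have : v ∈ s ++ t := by simpa [hv] using hvw.subset (mem_cons_self (l := [n + 1, v]))
    exact Nat.lt_succ_of_le (Finset.mem_Icc.1 (hdm.mem_Icc this)).2
  · have := hvw.filter (· ≠ n + 1)
    rw [filter_ne_append_cons_cons hs ht] at this
    simp only [filter_cons, ne_eq, hv, hw, not_false_eq_true, decide_true, filter_nil,
      if_true] at this
    exact h v w this

namespace IsStirlingPerm

variable {n : ℕ} {l : List ℕ}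

theorem exists_eq_append_succ_succ (h : IsStirlingPerm (n + 1) l) :
    ∃ s t, l = s ++ (n + 1) :: (n + 1) :: t ∧ n + 1 ∉ s ∧ n + 1 ∉ t := by
  rw [isStirlingPerm_iff_sublist] at h
  refine exists_eq_append_cons_cons (by simp [h.1 (n + 1)]) fun w hw => ?_
  have := Finset.mem_Icc.1 (h.1.mem_Icc (hw.subset (mem_cons_of_mem _ mem_cons_self)))
  exact absurd (h.2 _ _ hw) (by omega)

theorem filter_ne_succ (h : IsStirlingPerm (n + 1) l) :
    IsStirlingPerm n (l.filter (· ≠ n + 1)) := by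
  obtain ⟨s, t, rfl, hs, ht⟩ := h.exists_eq_append_succ_succ
  rw [filter_ne_append_cons_cons hs ht]
  exact (isStirlingPerm_succ_iff hs ht).1 h

theorem idxOf_succ_lt (h : IsStirlingPerm (n + 1) l) : l.idxOf (n + 1) < 2 * n + 1 := by
  obtain ⟨s, t, rfl, hs, ht⟩ := h.exists_eq_append_succ_succ
  have := ((isStirlingPerm_succ_iff hs ht).1 h).1.length_eq
  rw [idxOf_append_cons_cons hs]
  simp only [length_append] at this
  omega

theorem insert_succ_succ (h : IsStirlingPerm n l) (k : ℕ) :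
    IsStirlingPerm (n + 1) (l.take k ++ (n + 1) :: (n + 1) :: l.drop k) := by
  have hl := h.1.succ_notMem
  rw [isStirlingPerm_succ_iff (fun hk => hl (take_subset _ _ hk))
    (fun hk => hl (drop_subset _ _ hk)), take_append_drop]
  exact h

end IsStirlingPerm

def stirlingPermSuccEquiv (n : ℕ) :
    {l // IsStirlingPerm (n + 1) l} ≃ {l // IsStirlingPerm n l} × Fin (2 * n + 1) where
  toFun l :=
    (⟨l.1.filter (· ≠ n + 1), l.2.filter_ne_succ⟩,
      ⟨l.1.idxOf (n + 1), l.2.idxOf_succ_lt⟩)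
  invFun p := ⟨p.1.1.take p.2 ++ (n + 1) :: (n + 1) :: p.1.1.drop p.2,
    p.1.2.insert_succ_succ p.2⟩
  left_inv := by
    rintro ⟨l, hl⟩
    obtain ⟨s, t, rfl, hs, ht⟩ := hl.exists_eq_append_succ_succ
    refine Subtype.ext ?_
    dsimp only
    rw [filter_ne_append_cons_cons hs ht, idxOf_append_cons_cons hs, take_left, drop_left]
  right_inv := by
    rintro ⟨⟨l, hl⟩, k⟩
    have hk : k.1 ≤ l.length := by have := hl.1.length_eq; omega
    have hs : n + 1 ∉ l.take k := fun hm => hl.1.succ_notMem (take_subset _ _ hm)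
    have ht : n + 1 ∉ l.drop k := fun hm => hl.1.succ_notMem (drop_subset _ _ hm)
    refine Prod.ext (Subtype.ext ?_) (Fin.ext ?_) <;> dsimp only
    · rw [filter_ne_append_cons_cons hs ht, take_append_drop]
    · rw [idxOf_append_cons_cons hs, length_take, min_eq_left hk]

theorem stmt4_general (n : ℕ) :
    Nat.card {l : List ℕ // IsStirlingPerm n l}
      = Nat.doubleFactorial (2 * n - 1) := by
  induction n with
  | zero => simp [isStirlingPerm_zero_iff]
  | succ n ih =>
    rw [Nat.card_congr (stirlingPermSuccEquiv n), Nat.card_prod, ih, Nat.card_fin,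
      show 2 * (n + 1) - 1 = 2 * n + 1 by omega, Nat.doubleFactorial_add_one, mul_comm]

theorem stmt4 (n : ℕ) (hn : 1 ≤ n) :
    Nat.card {l : List ℕ // IsStirlingPerm n l}
      = Nat.doubleFactorial (2 * n - 1) :=
  stmt4_general n
end

section
/- A permutation p of {1,...,n} is (1-23-4)-avoiding if and only if every free ascent of p terminates at a right-to-left maximum, i.e., for every position b with p(b) < p(b+1) such that p(b) is not a left-to-right minimum of p, the entry p(b+1) satisfies p(c) < p(b+1) for all c > b+1. -/
/-- A permutation `p` of `{1,...,n}` (positions `Fin n`) contains the dashed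
pattern 1-23-4: there are positions `a < b`, `b' = b+1`, `c > b'` with
`p a < p b < p b' < p c`. -/
def Contains1234 {n : ℕ} (p : Equiv.Perm (Fin n)) : Prop :=
  ∃ a b b' c : Fin n, a < b ∧ (b' : ℕ) = (b : ℕ) + 1 ∧ b' < c ∧
    p a < p b ∧ p b < p b' ∧ p b' < p c

/-- The entry `p b` is a left-to-right minimum: every earlier entry is larger. -/
def IsLRMin {n : ℕ} (p : Equiv.Perm (Fin n)) (b : Fin n) : Prop :=
  ∀ a : Fin n, a < b → p b < p a

/-- The entry `p c` is a right-to-left maximum: every later entry is smaller. -/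
def IsRLMax {n : ℕ} (p : Equiv.Perm (Fin n)) (c : Fin n) : Prop :=
  ∀ d : Fin n, c < d → p d < p c

/-!
An occurrence `p a < p b < p (b+1) < p c` of 1-23-4 is exactly an ascent at `b` whose initiator
has a smaller entry to its left (so is not a left-to-right minimum) and whose terminator has a
larger entry to its right (so is not a right-to-left maximum); since `p` is injective, the weak
inequalities obtained by negating the definitions are strict.
-/

namespace Equiv.Perm

variable {n : ℕ} (p : Equiv.Perm (Fin n))

theorem not_isLRMin_iff {b : Fin n} : ¬ IsLRMin p b ↔ ∃ a, a < b ∧ p a < p b := by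
  simp only [IsLRMin, not_forall, not_lt, exists_prop]
  refine exists_congr fun a => and_congr_right fun hab => ?_
  exact (p.injective.ne hab.ne).le_iff_lt

theorem not_isRLMax_iff {c : Fin n} : ¬ IsRLMax p c ↔ ∃ d, c < d ∧ p c < p d := by
  simp only [IsRLMax, not_forall, not_lt, exists_prop]
  refine exists_congr fun d => and_congr_right fun hcd => ?_
  exact (p.injective.ne hcd.ne).le_iff_lt

theorem contains1234_iff_exists_free_ascent_not_isRLMax :
    Contains1234 p ↔ ∃ b b' : Fin n, (b' : ℕ) = (b : ℕ) + 1 ∧ p b < p b' ∧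
      ¬ IsLRMin p b ∧ ¬ IsRLMax p b' := by
  simp only [not_isLRMin_iff, not_isRLMax_iff]
  constructor
  · rintro ⟨a, b, b', c, hab, hb, hbc, hpab, hpbb', hpb'c⟩
    exact ⟨b, b', hb, hpbb', ⟨a, hab, hpab⟩, ⟨c, hbc, hpb'c⟩⟩
  · rintro ⟨b, b', hb, hpbb', ⟨a, hab, hpab⟩, ⟨c, hbc, hpb'c⟩⟩
    exact ⟨a, b, b', c, hab, hb, hbc, hpab, hpbb', hpb'c⟩

end Equiv.Perm

theorem stmt8_general (n : ℕ) (p : Equiv.Perm (Fin n)) :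
    ¬ Contains1234 p ↔
      ∀ b b' : Fin n, (b' : ℕ) = (b : ℕ) + 1 → p b < p b' →
        ¬ IsLRMin p b → IsRLMax p b' := by
  simp only [p.contains1234_iff_exists_free_ascent_not_isRLMax, not_exists, not_and, not_not]

theorem stmt8 (n : ℕ) (hn : 1 ≤ n) (p : Equiv.Perm (Fin n)) :
    ¬ Contains1234 p ↔
      ∀ b b' : Fin n, (b' : ℕ) = (b : ℕ) + 1 → p b < p b' →
        ¬ IsLRMin p b → IsRLMax p b' :=
  stmt8_general n p
end

section
/- For all n ≥ 1 and 1 ≤ k ≤ n, the number of valley-marked Dyck paths of semilength n whose first ascent has length k equals u(n,k), where u(n,k) is defined by u(0,0) = 1, u(n,0) = 0 for n ≥ 1, and u(n,k) = u(n-1,k-1) + k·Σ_{j=k}^{n-1} u(n-1,j) for 1 ≤ k ≤ n. -/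
/-- A Dyck path of semilength `n`, encoded as a list of booleans where `true`
is an up-step `U = (1,1)` and `false` is a down-step `D = (1,-1)`: it has `2n`
steps, never goes below the x-axis, and ends on the x-axis. -/
def IsDyckPath (n : ℕ) (p : List Bool) : Prop :=
  p.length = 2 * n ∧
    (∀ i : ℕ, (p.take i).count false ≤ (p.take i).count true) ∧
    p.count false = p.count true

/-- The height of the lattice point reached after the first `j` steps. -/
def pathHeight (p : List Bool) (j : ℕ) : ℕ :=
  (p.take j).count true - (p.take j).count false

/-- There is a valley (a `D` step immediately followed by a `U` step) at
position `i`; its valley vertex is the point reached after `i+1` steps. -/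
def IsValley (p : List Bool) (i : ℕ) : Prop :=
  p[i]? = some false ∧ p[i + 1]? = some true

/-- A valley-marking of the path `p`: for each valley, a choice of one of the
lattice points between the valley vertex and the x-axis inclusive, i.e. an
integer mark `m` with `0 ≤ m ≤` the height of the valley vertex (and, for
bookkeeping, the mark is `0` at non-valley positions). -/
def IsValleyMarking (p : List Bool) (m : ℕ → ℕ) : Prop :=
  ∀ i : ℕ, (IsValley p i → m i ≤ pathHeight p (i + 1)) ∧
    (¬ IsValley p i → m i = 0)

/-- The length of the first ascent: the initial maximal run of `U` steps. -/
def firstAscentLength (p : List Bool) : ℕ :=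
  (p.takeWhile id).length

/-!
Write a path of semilength `N + 1` with first ascent of length `K + 1` as `U^K (U D) s`.
Erasing the first peak `U D` gives the path `U^K s` of semilength `N` with first ascent at
least `K`, and every valley of the old path other than the one just after that peak
survives, shifted by two steps and at the same height. That valley exists exactly when `s`
starts with `U`, i.e. when the new first ascent is longer than `K`, and it lies at height `K`.
So marked paths with first ascent `K + 1` correspond to marked paths of semilength `N` with
first ascent exactly `K`, together with `K + 1` copies (the mark of the lost valley) of those
with first ascent at least `K + 1`, which is the recursion defining `u`.
-/

lemma Nat.card_sep_le_eq_sum_Icc {α : Type*} {s : Set α} [Finite s] {f : α → ℕ} {n : ℕ}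
    (hf : ∀ x ∈ s, f x ≤ n) (k : ℕ) :
    Nat.card {x ∈ s | k ≤ f x} = ∑ j ∈ Finset.Icc k n, Nat.card {x ∈ s | f x = j} := by
  induction hd : n + 1 - k generalizing k with
  | zero =>
    have hempty : {x ∈ s | k ≤ f x} = ∅ :=
      Set.eq_empty_of_forall_notMem fun x hx => by have := hf x hx.1; have := hx.2; omega
    rw [hempty, Finset.Icc_eq_empty (by omega)]
    simp
  | succ d ih =>
    have hsplit : {x ∈ s | k ≤ f x} = {x ∈ s | f x = k} ∪ {x ∈ s | k + 1 ≤ f x} := by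
      ext x
      by_cases hx : x ∈ s <;> simp [hx]
      omega
    have hdisj : Disjoint {x ∈ s | f x = k} {x ∈ s | k + 1 ≤ f x} :=
      Set.disjoint_left.2 fun x hx hx' => by have := hx.2; have := hx'.2; omega
    rw [Nat.card_coe_set_eq, hsplit, Set.ncard_union_eq hdisj (Set.toFinite _) (Set.toFinite _),
      ← Nat.card_coe_set_eq, ← Nat.card_coe_set_eq, ih (k + 1) (by omega),
      Finset.Icc_add_one_left_eq_Ioc,
      Finset.add_sum_Ioc_eq_sum_Icc (f := fun j => Nat.card {x ∈ s | f x = j}) (by omega)]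

namespace ValleyMarkedDyck

lemma firstAscentLength_nil : firstAscentLength [] = 0 := rfl

lemma firstAscentLength_false_cons (l : List Bool) : firstAscentLength (false :: l) = 0 := rfl

lemma firstAscentLength_true_cons (l : List Bool) :
    firstAscentLength (true :: l) = firstAscentLength l + 1 := by
  simp [firstAscentLength]

lemma firstAscentLength_replicate_append (k : ℕ) (l : List Bool) :
    firstAscentLength (List.replicate k true ++ l) = k + firstAscentLength l := by
  induction k with
  | zero => simp
  | succ k ih => rw [List.replicate_succ, List.cons_append, firstAscentLength_true_cons, ih]; omega

lemma replicate_append_drop_of_le_firstAscentLength {p : List Bool} {k : ℕ}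
    (h : k ≤ firstAscentLength p) : List.replicate k true ++ p.drop k = p := by
  induction k generalizing p with
  | zero => simp
  | succ k ih =>
    match p, h with
    | true :: t, h =>
      rw [firstAscentLength_true_cons] at h
      rw [List.replicate_succ, List.cons_append, List.drop_succ_cons, ih (by omega)]

lemma firstAscentLength_le_of_isDyckPath {n : ℕ} {p : List Bool} (hp : IsDyckPath n p) :
    firstAscentLength p ≤ n := by
  have hcount := congrArg (List.count true)
    (replicate_append_drop_of_le_firstAscentLength (le_refl (firstAscentLength p)))
  simp only [List.count_append, List.count_replicate_self] at hcount
  have := p.count_true_add_count_false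
  have := hp.1
  have := hp.2.2
  omega

lemma one_le_firstAscentLength_of_isDyckPath {n : ℕ} {p : List Bool}
    (hp : IsDyckPath (n + 1) p) : 1 ≤ firstAscentLength p := by
  match p, hp with
  | [], hp => simpa using hp.1
  | false :: _, hp => simpa using hp.2.1 1
  | true :: _, _ => simp [firstAscentLength_true_cons]

lemma take_append_peak (a s : List Bool) (j : ℕ) :
    (a ++ true :: false :: s).take (a.length + 2 + j) = a ++ true :: false :: s.take j := by
  rw [show a.length + 2 + j = a.length + (j + 2) by omega, List.take_length_add_append]
  rfl

lemma isDyckPath_append_peak_iff (n : ℕ) (a s : List Bool) :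
    IsDyckPath (n + 1) (a ++ true :: false :: s) ↔ IsDyckPath n (a ++ s) := by
  have hcount : (a ++ true :: false :: s).count false = (a ++ s).count false + 1 ∧
      (a ++ true :: false :: s).count true = (a ++ s).count true + 1 := by
    simp [List.count_append]
    omega
  constructor
  · rintro ⟨hlen, hprefix, hbal⟩
    refine ⟨by simp at hlen ⊢; omega, fun i => ?_, by omega⟩
    rcases le_or_gt i a.length with hi | hi
    · simpa [List.take_append_of_le_length hi] using hprefix i
    · obtain ⟨j, rfl⟩ := Nat.exists_eq_add_of_le hi.le
      have := hprefix (a.length + 2 + j)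
      simp [take_append_peak, List.take_length_add_append, List.count_append] at this ⊢
      omega
  · rintro ⟨hlen, hprefix, hbal⟩
    refine ⟨by simp at hlen ⊢; omega, fun i => ?_, by omega⟩
    rcases le_or_gt i a.length with hi | hi
    · simpa [List.take_append_of_le_length hi] using hprefix i
    · rcases Nat.lt_or_ge i (a.length + 2) with hi' | hi'
      · obtain rfl : i = a.length + 1 := by omega
        have := hprefix a.length
        simp [List.take_length_add_append, List.count_append] at this ⊢
        omega
      · obtain ⟨j, rfl⟩ := Nat.exists_eq_add_of_le hi'
        have := hprefix (a.length + j)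
        simp [take_append_peak, List.take_length_add_append, List.count_append] at this ⊢
        omega

lemma exists_eq_replicate_append_peak {n k : ℕ} {p : List Bool} (hp : IsDyckPath (n + 1) p)
    (hk : firstAscentLength p = k + 1) :
    ∃ s, p = List.replicate k true ++ true :: false :: s := by
  have hsplit := replicate_append_drop_of_le_firstAscentLength hk.ge
  have hlen : k + 1 < p.length := by
    have := firstAscentLength_le_of_isDyckPath hp
    have := hp.1
    omega
  have hrest : firstAscentLength (p.drop (k + 1)) = 0 := by
    have := firstAscentLength_replicate_append (k + 1) (p.drop (k + 1))
    rw [hsplit] at this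
    omega
  match hd : p.drop (k + 1), hrest with
  | false :: s, _ =>
    refine ⟨s, ?_⟩
    rw [← hsplit, hd, List.replicate_succ', List.append_assoc, List.singleton_append]
  | true :: s, h => simp [firstAscentLength_true_cons] at h
  | [], _ => simp [← List.length_eq_zero_iff] at hd; omega

lemma isValley_append_peak_iff (a s : List Bool) (j : ℕ) :
    IsValley (a ++ true :: false :: s) (a.length + 2 + j) ↔ IsValley (a ++ s) (a.length + j) := by
  unfold IsValley
  rw [List.getElem?_append_right (by omega), List.getElem?_append_right (by omega),
    List.getElem?_append_right (by omega), List.getElem?_append_right (by omega)]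
  simp [show a.length + 2 + j - a.length = j + 2 by omega,
    show a.length + 2 + j + 1 - a.length = j + 1 + 2 by omega,
    show a.length + j + 1 - a.length = j + 1 by omega]

lemma pathHeight_append_peak (a s : List Bool) (j : ℕ) :
    pathHeight (a ++ true :: false :: s) (a.length + 2 + j) =
      pathHeight (a ++ s) (a.length + j) := by
  unfold pathHeight
  rw [take_append_peak, List.take_length_add_append]
  simp [List.count_append]
  omega

lemma not_isValley_replicate_append {k i : ℕ} (h : i < k) (l : List Bool) :
    ¬ IsValley (List.replicate k true ++ l) i := by
  intro hv
  have := hv.1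
  rw [List.getElem?_append_left (by simpa using h), List.getElem?_replicate] at this
  simp [h] at this

lemma replicate_append_true_cons (K : ℕ) (l : List Bool) :
    List.replicate K true ++ true :: l = List.replicate (K + 1) true ++ l := by
  rw [List.replicate_succ', List.append_assoc, List.singleton_append]

def erasePeakMarks (k : ℕ) (m : ℕ → ℕ) : ℕ → ℕ :=
  fun j => if j < k then 0 else m (j + 2)

/-- The inserted peak occupies positions `k` and `k + 1`; `a` is the mark of the valley at
position `k + 1`, which exists exactly when the path goes on with an up step. -/
def insertPeakMarks (k a : ℕ) (m : ℕ → ℕ) : ℕ → ℕ :=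
  fun i => if i = k + 1 then a else if i < k + 2 then 0 else m (i - 2)

section FirstPeak

variable {K : ℕ} {s : List Bool}

lemma isValley_replicate_append_peak_add_two_iff {j : ℕ} (hj : K ≤ j) :
    IsValley (List.replicate K true ++ true :: false :: s) (j + 2) ↔
      IsValley (List.replicate K true ++ s) j := by
  obtain ⟨d, rfl⟩ := Nat.exists_eq_add_of_le hj
  simpa [add_right_comm] using isValley_append_peak_iff (List.replicate K true) s d

lemma pathHeight_replicate_append_peak_add_three {j : ℕ} (hj : K ≤ j) :
    pathHeight (List.replicate K true ++ true :: false :: s) (j + 3) =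
      pathHeight (List.replicate K true ++ s) (j + 1) := by
  obtain ⟨d, rfl⟩ := Nat.exists_eq_add_of_le hj
  have := pathHeight_append_peak (List.replicate K true) s (d + 1)
  rw [List.length_replicate] at this
  rw [show K + d + 3 = K + 2 + (d + 1) by omega, this, add_assoc]

lemma isValley_replicate_append_peak_iff :
    IsValley (List.replicate K true ++ true :: false :: s) (K + 1) ↔
      K < firstAscentLength (List.replicate K true ++ s) := by
  rw [replicate_append_true_cons, firstAscentLength_replicate_append]
  unfold IsValley
  rw [List.getElem?_append_right (by simp), List.getElem?_append_right (by simp)]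
  match s with
  | [] => simp [firstAscentLength_nil]
  | b :: t => cases b <;> simp [firstAscentLength_false_cons, firstAscentLength_true_cons]

lemma pathHeight_replicate_append_peak :
    pathHeight (List.replicate K true ++ true :: false :: s) (K + 2) = K := by
  have := pathHeight_append_peak (List.replicate K true) s 0
  rw [List.length_replicate] at this
  rw [this]
  simp [pathHeight, List.count_replicate]

lemma not_isValley_replicate_append_peak {i : ℕ} (hi : i ≤ K) :
    ¬ IsValley (List.replicate K true ++ true :: false :: s) i := by
  rw [replicate_append_true_cons]
  exact not_isValley_replicate_append (by omega) _

variable {m : ℕ → ℕ} {a : ℕ}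

lemma IsValleyMarking.erasePeakMarks
    (hm : IsValleyMarking (List.replicate K true ++ true :: false :: s) m) :
    IsValleyMarking (List.replicate K true ++ s) (erasePeakMarks K m) := by
  intro j
  unfold ValleyMarkedDyck.erasePeakMarks
  split_ifs with hj
  · exact ⟨fun hv => absurd hv (not_isValley_replicate_append hj s), fun _ => rfl⟩
  · have hj : K ≤ j := by omega
    rw [← isValley_replicate_append_peak_add_two_iff hj,
      ← pathHeight_replicate_append_peak_add_three hj]
    exact hm (j + 2)

lemma IsValleyMarking.insertPeakMarks (hm : IsValleyMarking (List.replicate K true ++ s) m)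
    (ha : a ≤ K) (h0 : a = 0 ∨ K < firstAscentLength (List.replicate K true ++ s)) :
    IsValleyMarking (List.replicate K true ++ true :: false :: s) (insertPeakMarks K a m) := by
  intro i
  unfold ValleyMarkedDyck.insertPeakMarks
  split_ifs with h1 h2
  · subst h1
    rw [isValley_replicate_append_peak_iff, pathHeight_replicate_append_peak]
    exact ⟨fun _ => ha, h0.resolve_right⟩
  · exact ⟨fun hv => absurd hv (not_isValley_replicate_append_peak (by omega)), fun _ => rfl⟩
  · obtain ⟨j, rfl⟩ : ∃ j, i = j + 2 := ⟨i - 2, by omega⟩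
    have hj : K ≤ j := by omega
    rw [Nat.add_sub_cancel, isValley_replicate_append_peak_add_two_iff hj,
      pathHeight_replicate_append_peak_add_three hj]
    exact hm j

lemma IsValleyMarking.apply_succ_le
    (hm : IsValleyMarking (List.replicate K true ++ true :: false :: s) m) : m (K + 1) ≤ K := by
  by_cases hv : IsValley (List.replicate K true ++ true :: false :: s) (K + 1)
  · simpa [pathHeight_replicate_append_peak] using (hm (K + 1)).1 hv
  · simp [(hm (K + 1)).2 hv]

lemma IsValleyMarking.apply_succ_eq_zero_or
    (hm : IsValleyMarking (List.replicate K true ++ true :: false :: s) m) :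
    m (K + 1) = 0 ∨ K < firstAscentLength (List.replicate K true ++ s) := by
  rw [← isValley_replicate_append_peak_iff]
  exact (em _).symm.imp (hm (K + 1)).2 id

lemma insertPeakMarks_erasePeakMarks
    (hm : IsValleyMarking (List.replicate K true ++ true :: false :: s) m) :
    insertPeakMarks K (m (K + 1)) (erasePeakMarks K m) = m := by
  funext i
  unfold insertPeakMarks erasePeakMarks
  split_ifs with h1 h2 h3
  · rw [h1]
  · exact ((hm i).2 (not_isValley_replicate_append_peak (by omega))).symm
  · omega
  · rw [Nat.sub_add_cancel (by omega)]

lemma erasePeakMarks_insertPeakMarks (hm : IsValleyMarking (List.replicate K true ++ s) m) :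
    erasePeakMarks K (insertPeakMarks K a m) = m := by
  funext j
  simp only [insertPeakMarks, erasePeakMarks]
  split_ifs with h1 h2 h3
  · exact ((hm j).2 (not_isValley_replicate_append h1 s)).symm
  · omega
  · omega
  · rw [Nat.add_sub_cancel]

end FirstPeak

def markedDyckPaths (n : ℕ) : Set (List Bool × (ℕ → ℕ)) :=
  {x | IsDyckPath n x.1 ∧ IsValleyMarking x.1 x.2}

lemma IsValleyMarking.le_length {p : List Bool} {m : ℕ → ℕ} (hm : IsValleyMarking p m)
    (i : ℕ) : m i ≤ p.length := by
  by_cases hv : IsValley p i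
  · refine ((hm i).1 hv).trans ?_
    have := (p.take (i + 1)).count_le_length (a := true)
    have := p.length_take_le (i + 1)
    unfold pathHeight
    simp at *
    omega
  · simp [(hm i).2 hv]

lemma IsValleyMarking.eq_zero_of_length_le {p : List Bool} {m : ℕ → ℕ}
    (hm : IsValleyMarking p m) {i : ℕ} (hi : p.length ≤ i) : m i = 0 :=
  (hm i).2 fun hv => by simpa [List.getElem?_eq_none hi] using hv.1

instance (n : ℕ) : Finite (markedDyckPaths n) := by
  refine Finite.of_injective (β := List.Vector Bool (2 * n) × (Fin (2 * n) → Fin (2 * n + 1)))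
    (fun x => (⟨x.1.1, x.2.1.1⟩, fun i =>
      ⟨x.1.2 i, Nat.lt_succ_of_le ((IsValleyMarking.le_length x.2.2 i).trans_eq x.2.1.1)⟩)) ?_
  rintro ⟨⟨p, m⟩, hd, hm⟩ ⟨⟨p', m'⟩, hd', hm'⟩ h
  refine Subtype.ext (Prod.ext (congrArg (fun v => v.1.1) h) (funext fun i => ?_))
  by_cases hi : i < 2 * n
  · exact congrArg (fun v => (v.2 ⟨i, hi⟩).1) h
  · rw [IsValleyMarking.eq_zero_of_length_le hm (hd.1.trans_le (by omega)),
      IsValleyMarking.eq_zero_of_length_le hm' (hd'.1.trans_le (by omega))]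

def erasePeak (k : ℕ) (x : List Bool × (ℕ → ℕ)) : List Bool × (ℕ → ℕ) :=
  (x.1.take k ++ x.1.drop (k + 2), erasePeakMarks k x.2)

def insertPeak (k a : ℕ) (x : List Bool × (ℕ → ℕ)) : List Bool × (ℕ → ℕ) :=
  (x.1.take k ++ true :: false :: x.1.drop k, insertPeakMarks k a x.2)

section FirstPeakSurgery

variable {N K a : ℕ} {x y : List Bool × (ℕ → ℕ)}

lemma erasePeak_replicate_append_peak (s : List Bool) (m : ℕ → ℕ) :
    erasePeak K (List.replicate K true ++ true :: false :: s, m) =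
      (List.replicate K true ++ s, erasePeakMarks K m) := by
  simp [erasePeak, List.drop_append]

lemma insertPeak_replicate_append (s : List Bool) (m : ℕ → ℕ) :
    insertPeak K a (List.replicate K true ++ s, m) =
      (List.replicate K true ++ true :: false :: s, insertPeakMarks K a m) := by
  simp [insertPeak]

lemma erasePeak_mem
    (hx : x ∈ {x ∈ markedDyckPaths (N + 1) | firstAscentLength x.1 = K + 1}) :
    erasePeak K x ∈ {x ∈ markedDyckPaths N | K ≤ firstAscentLength x.1} := by
  obtain ⟨p, m⟩ := x
  obtain ⟨⟨hd, hm⟩, hf⟩ := hx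
  obtain ⟨s, rfl⟩ := exists_eq_replicate_append_peak hd hf
  rw [erasePeak_replicate_append_peak]
  exact ⟨⟨(isDyckPath_append_peak_iff N _ s).1 hd, IsValleyMarking.erasePeakMarks hm⟩,
    by simp [firstAscentLength_replicate_append]⟩

lemma insertPeak_mem (hy : y ∈ {x ∈ markedDyckPaths N | K ≤ firstAscentLength x.1})
    (ha : a ≤ K) (h0 : a = 0 ∨ K < firstAscentLength y.1) :
    insertPeak K a y ∈ {x ∈ markedDyckPaths (N + 1) | firstAscentLength x.1 = K + 1} := by
  obtain ⟨p, m⟩ := y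
  obtain ⟨⟨hd, hm⟩, hk⟩ := hy
  obtain ⟨s, rfl⟩ : ∃ s, p = List.replicate K true ++ s :=
    ⟨_, (replicate_append_drop_of_le_firstAscentLength hk).symm⟩
  rw [insertPeak_replicate_append]
  exact ⟨⟨(isDyckPath_append_peak_iff N _ s).2 hd, IsValleyMarking.insertPeakMarks hm ha h0⟩,
    by simp [firstAscentLength_replicate_append, firstAscentLength_true_cons,
      firstAscentLength_false_cons]⟩

lemma insertPeak_erasePeak
    (hx : x ∈ {x ∈ markedDyckPaths (N + 1) | firstAscentLength x.1 = K + 1}) :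
    insertPeak K (x.2 (K + 1)) (erasePeak K x) = x := by
  obtain ⟨p, m⟩ := x
  obtain ⟨⟨hd, hm⟩, hf⟩ := hx
  obtain ⟨s, rfl⟩ := exists_eq_replicate_append_peak hd hf
  rw [erasePeak_replicate_append_peak, insertPeak_replicate_append,
    insertPeakMarks_erasePeakMarks hm]

lemma erasePeak_insertPeak (hy : y ∈ {x ∈ markedDyckPaths N | K ≤ firstAscentLength x.1}) :
    erasePeak K (insertPeak K a y) = y := by
  obtain ⟨p, m⟩ := y
  obtain ⟨⟨hd, hm⟩, hk⟩ := hy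
  obtain ⟨s, rfl⟩ : ∃ s, p = List.replicate K true ++ s :=
    ⟨_, (replicate_append_drop_of_le_firstAscentLength hk).symm⟩
  rw [insertPeak_replicate_append, erasePeak_replicate_append_peak,
    erasePeakMarks_insertPeakMarks hm]

lemma apply_succ_le_of_mem
    (hx : x ∈ {x ∈ markedDyckPaths (N + 1) | firstAscentLength x.1 = K + 1}) :
    x.2 (K + 1) ≤ K := by
  obtain ⟨p, m⟩ := x
  obtain ⟨⟨hd, hm⟩, hf⟩ := hx
  obtain ⟨s, rfl⟩ := exists_eq_replicate_append_peak hd hf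
  exact IsValleyMarking.apply_succ_le hm

lemma apply_succ_eq_zero_or_of_mem
    (hx : x ∈ {x ∈ markedDyckPaths (N + 1) | firstAscentLength x.1 = K + 1}) :
    x.2 (K + 1) = 0 ∨ K < firstAscentLength (erasePeak K x).1 := by
  obtain ⟨p, m⟩ := x
  obtain ⟨⟨hd, hm⟩, hf⟩ := hx
  obtain ⟨s, rfl⟩ := exists_eq_replicate_append_peak hd hf
  rw [erasePeak_replicate_append_peak]
  exact IsValleyMarking.apply_succ_eq_zero_or hm

end FirstPeakSurgery

def firstPeakEquiv (N K : ℕ) :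
    {x ∈ markedDyckPaths (N + 1) | firstAscentLength x.1 = K + 1} ≃
      {x ∈ markedDyckPaths N | firstAscentLength x.1 = K} ⊕
        Fin (K + 1) × {x ∈ markedDyckPaths N | K + 1 ≤ firstAscentLength x.1} where
  toFun x :=
    if h : K < firstAscentLength (erasePeak K x).1 then
      .inr (⟨x.1.2 (K + 1), Nat.lt_succ_of_le (apply_succ_le_of_mem x.2)⟩,
        ⟨erasePeak K x, (erasePeak_mem x.2).1, h⟩)
    else .inl ⟨erasePeak K x, (erasePeak_mem x.2).1, by have := (erasePeak_mem x.2).2; omega⟩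
  invFun
    | .inl y => ⟨insertPeak K 0 y, insertPeak_mem ⟨y.2.1, y.2.2.ge⟩ K.zero_le (.inl rfl)⟩
    | .inr (a, y) => ⟨insertPeak K a y,
        insertPeak_mem ⟨y.2.1, by have := y.2.2; omega⟩ (Nat.lt_succ_iff.1 a.2) (.inr y.2.2)⟩
  left_inv x := by
    dsimp only
    split_ifs with h
    · exact Subtype.ext (insertPeak_erasePeak x.2)
    · have hx := insertPeak_erasePeak x.2
      rw [(apply_succ_eq_zero_or_of_mem x.2).resolve_right h] at hx
      exact Subtype.ext hx
  right_inv := by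
    rintro (y | ⟨a, y⟩)
    · have hy := erasePeak_insertPeak (a := 0) (⟨y.2.1, y.2.2.ge⟩ :
        y.1 ∈ {x ∈ markedDyckPaths N | K ≤ firstAscentLength x.1})
      dsimp only
      rw [dif_neg (by rw [hy, y.2.2]; omega)]
      exact congrArg Sum.inl (Subtype.ext hy)
    · have hy := erasePeak_insertPeak (a := a) (⟨y.2.1, by have := y.2.2; omega⟩ :
        y.1 ∈ {x ∈ markedDyckPaths N | K ≤ firstAscentLength x.1})
      dsimp only
      rw [dif_pos (by rw [hy]; exact y.2.2)]
      exact congrArg Sum.inr (Prod.ext (Fin.ext (by simp [insertPeak, insertPeakMarks]))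
        (Subtype.ext hy))

lemma card_firstAscent_succ_succ (N K : ℕ) :
    Nat.card {x ∈ markedDyckPaths (N + 1) | firstAscentLength x.1 = K + 1} =
      Nat.card {x ∈ markedDyckPaths N | firstAscentLength x.1 = K} +
        (K + 1) * ∑ j ∈ Finset.Icc (K + 1) N,
          Nat.card {x ∈ markedDyckPaths N | firstAscentLength x.1 = j} := by
  rw [Nat.card_congr (firstPeakEquiv N K), Nat.card_sum, Nat.card_prod, Nat.card_fin,
    Nat.card_sep_le_eq_sum_Icc fun x hx => firstAscentLength_le_of_isDyckPath hx.1]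

lemma card_firstAscent_succ_zero (N : ℕ) :
    Nat.card {x ∈ markedDyckPaths (N + 1) | firstAscentLength x.1 = 0} = 0 := by
  rw [Nat.card_coe_set_eq, Set.ncard_eq_zero]
  exact Set.eq_empty_of_forall_notMem fun x hx => by
    have := one_le_firstAscentLength_of_isDyckPath hx.1.1
    have := hx.2
    omega

lemma isValleyMarking_nil_iff {m : ℕ → ℕ} : IsValleyMarking [] m ↔ m = 0 := by
  have hv (i : ℕ) : ¬ IsValley [] i := fun hv => by simpa using hv.1
  simp [IsValleyMarking, hv, funext_iff]

lemma card_firstAscent_zero_zero :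
    Nat.card {x ∈ markedDyckPaths 0 | firstAscentLength x.1 = 0} = 1 := by
  have hsingleton : {x ∈ markedDyckPaths 0 | firstAscentLength x.1 = 0} = {([], 0)} := by
    ext ⟨p, m⟩
    simp only [markedDyckPaths, Set.mem_ofPred_eq, Set.mem_singleton_iff, Prod.mk.injEq]
    constructor
    · rintro ⟨⟨hd, hm⟩, -⟩
      obtain rfl : p = [] := List.length_eq_zero_iff.1 hd.1
      exact ⟨rfl, isValleyMarking_nil_iff.1 hm⟩
    · rintro ⟨rfl, rfl⟩
      exact ⟨⟨⟨rfl, by simp, rfl⟩, isValleyMarking_nil_iff.2 rfl⟩, rfl⟩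
  rw [hsingleton, Nat.card_unique]

lemma card_firstAscent_eq_of_rec {u : ℕ → ℕ → ℕ} (hu0 : u 0 0 = 1)
    (hu1 : ∀ n : ℕ, 1 ≤ n → u n 0 = 0)
    (hrec : ∀ n k : ℕ, 1 ≤ k → k ≤ n →
      u n k = u (n - 1) (k - 1) + k * ∑ j ∈ Finset.Icc k (n - 1), u (n - 1) j)
    (n k : ℕ) (hkn : k ≤ n) :
    Nat.card {x ∈ markedDyckPaths n | firstAscentLength x.1 = k} = u n k := by
  induction n generalizing k with
  | zero =>
    obtain rfl : k = 0 := by omega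
    rw [card_firstAscent_zero_zero, hu0]
  | succ N ih =>
    rcases k with _ | K
    · rw [card_firstAscent_succ_zero, hu1 _ N.succ_pos]
    · rw [card_firstAscent_succ_succ, hrec (N + 1) (K + 1) K.succ_pos hkn, Nat.add_sub_cancel,
        Nat.add_sub_cancel, ih K (by omega)]
      congr 2
      exact Finset.sum_congr rfl fun j hj => ih j (Finset.mem_Icc.1 hj).2

end ValleyMarkedDyck

theorem stmt9_general (u : ℕ → ℕ → ℕ) (hu0 : u 0 0 = 1)
    (hu1 : ∀ n : ℕ, 1 ≤ n → u n 0 = 0)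
    (hrec : ∀ n k : ℕ, 1 ≤ k → k ≤ n →
      u n k = u (n - 1) (k - 1) + k * ∑ j ∈ Finset.Icc k (n - 1), u (n - 1) j)
    (n k : ℕ) (hkn : k ≤ n) :
    Nat.card {pm : List Bool × (ℕ → ℕ) //
        IsDyckPath n pm.1 ∧ IsValleyMarking pm.1 pm.2 ∧
          firstAscentLength pm.1 = k}
      = u n k := by
  rw [← ValleyMarkedDyck.card_firstAscent_eq_of_rec hu0 hu1 hrec n k hkn]
  exact Nat.card_congr (Equiv.subtypeEquivRight fun _ => and_assoc.symm)

theorem stmt9 (u : ℕ → ℕ → ℕ) (hu0 : u 0 0 = 1)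
    (hu1 : ∀ n : ℕ, 1 ≤ n → u n 0 = 0)
    (hrec : ∀ n k : ℕ, 1 ≤ k → k ≤ n →
      u n k = u (n - 1) (k - 1) + k * ∑ j ∈ Finset.Icc k (n - 1), u (n - 1) j)
    (n k : ℕ) (hn : 1 ≤ n) (hk : 1 ≤ k) (hkn : k ≤ n) :
    Nat.card {pm : List Bool × (ℕ → ℕ) //
        IsDyckPath n pm.1 ∧ IsValleyMarking pm.1 pm.2 ∧
          firstAscentLength pm.1 = k}
      = u n k :=
  stmt9_general u hu0 hu1 hrec n k hkn
end
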